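/- Let λ ∈ P_{k,n} with λ_k > 0, and 1 ≤ i ≤ n−k. Set \tildeλ = λ↑(n−λ_k) (equivalently λ↓λ_k, so \tildeλ = (λ_1−λ_k, …, λ_{k−1}−λ_k, 0)). Suppose \tildeν ∈ P_{k,n} satisfies \tildeν ⊇ \tildeλ with \tildeν/\tildeλ a horizontal strip and |\tildeν/\tildeλ| ≥ i. Then \tildeν_2 ≤ λ_1 − λ_k, and consequently applying the Seidel shift λ_k times to \tildeν extracts at most one power of q; more precisely, writing |\tildeν| − |\tildeν↑λ_k| + λ_k·k = n·d for the integer d, one has d ≤ 1, and d = 1 if and only if \tildeν_1 > n − k − λ_k. -/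
import Mathlib


/-- The first Seidel shift of a partition in `P_{k,n}`:
`λ↑1 = (λ₁+1, …, λ_k+1)` if `λ₁ < n-k`, and `(λ₂, …, λ_k, 0)` if `λ₁ = n-k`. -/
def seidelShift1 (n k : ℕ) (lam : Fin k → ℕ) : Fin k → ℕ :=
  if hk : 0 < k then
    if lam ⟨0, hk⟩ = n - k then
      fun i => if h : (i : ℕ) + 1 < k then lam ⟨(i : ℕ) + 1, h⟩ else 0
    else fun i => lam i + 1
  else lam

/-- The `p`-th Seidel shift `λ↑p`. -/
def seidelShift (n k : ℕ) (p : ℕ) (lam : Fin k → ℕ) : Fin k → ℕ :=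
  (seidelShift1 n k)^[p] lam

/-- The dual partition `λ^∨ = (n-k-λ_k, …, n-k-λ₁)`. -/
def dualPart (n k : ℕ) (lam : Fin k → ℕ) : Fin k → ℕ :=
  fun i => n - k - lam ⟨k - 1 - (i : ℕ), by have := i.isLt; omega⟩

lemma lam_congr {k : ℕ} (lam : Fin k → ℕ) {a b : ℕ} (ha : a < k) (hb : b < k)
    (h : a = b) : lam ⟨a, ha⟩ = lam ⟨b, hb⟩ := by subst h; rfl

lemma shift1_inc (n k : ℕ) (hk : 0 < k) (lam : Fin k → ℕ) (h : lam ⟨0, hk⟩ ≠ n - k) :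
    seidelShift1 n k lam = fun i => lam i + 1 := by
  simp [seidelShift1, hk, h]

lemma shift1_rot (n k : ℕ) (hk : 0 < k) (lam : Fin k → ℕ) (h : lam ⟨0, hk⟩ = n - k) :
    seidelShift1 n k lam =
      fun i : Fin k => if h2 : (i : ℕ) + 1 < k then lam ⟨(i : ℕ) + 1, h2⟩ else 0 := by
  simp [seidelShift1, hk, h]

lemma shift_succ (n k p : ℕ) (lam : Fin k → ℕ) :
    seidelShift n k (p + 1) lam = seidelShift n k p (seidelShift1 n k lam) :=
  Function.iterate_succ_apply _ _ _

lemma shift_succ' (n k p : ℕ) (lam : Fin k → ℕ) :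
    seidelShift n k (p + 1) lam = seidelShift1 n k (seidelShift n k p lam) :=
  Function.iterate_succ_apply' _ _ _

lemma shift_add (n k a b : ℕ) (lam : Fin k → ℕ) :
    seidelShift n k (a + b) lam = seidelShift n k a (seidelShift n k b lam) :=
  Function.iterate_add_apply _ _ _ _

lemma shift_inc (n k : ℕ) (hk : 0 < k) (p : ℕ) (lam : Fin k → ℕ)
    (h : lam ⟨0, hk⟩ + p ≤ n - k) :
    seidelShift n k p lam = fun i => lam i + p := by
  induction p with
  | zero => funext i; simp [seidelShift]
  | succ p ih =>
    rw [shift_succ', ih (by omega),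
      shift1_inc n k hk _ (show lam ⟨0, hk⟩ + p ≠ n - k by omega)]
    funext i
    show lam i + p + 1 = lam i + (p + 1)
    omega

/-- configuration after the `r`-th rotation, where `m = lam (r-1)` -/
def cfg (n k r m : ℕ) (lam : Fin k → ℕ) : Fin k → ℕ := fun i =>
  if h : (i : ℕ) + r < k then lam ⟨(i : ℕ) + r, h⟩ + (n - k - m)
  else (if h2 : (i : ℕ) + r - k < k then lam ⟨(i : ℕ) + r - k, h2⟩ else 0) - m

lemma cfg_at0 (n k r m : ℕ) (lam : Fin k → ℕ) (hk : 0 < k) (hrk : r < k) :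
    cfg n k r m lam ⟨0, hk⟩ = lam ⟨r, hrk⟩ + (n - k - m) := by
  simp only [cfg, Nat.zero_add]
  rw [dif_pos hrk]

lemma shift_main (n k : ℕ) (hk : 0 < k) (hkn : k ≤ n) (lam : Fin k → ℕ)
    (hanti : Antitone lam) (hle : ∀ j, lam j ≤ n - k) :
    ∀ r : ℕ, 1 ≤ r → ∀ hrk : r ≤ k,
      seidelShift n k (n - k - lam ⟨r - 1, by omega⟩ + r) lam
        = cfg n k r (lam ⟨r - 1, by omega⟩) lam := by
  intro r
  induction r with
  | zero => intro h; exact absurd h (by norm_num)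
  | succ r ih =>
    intro _ hrk
    simp only [Nat.add_sub_cancel]
    have hrk' : r < k := by omega
    rcases Nat.eq_zero_or_pos r with hr0 | hr0
    · subst hr0
      simp only [Nat.zero_add]
      have h0 := hle ⟨0, hk⟩
      rw [shift_succ', shift_inc n k hk _ lam (by omega),
        shift1_rot n k hk _ (show lam ⟨0, hk⟩ + (n - k - lam ⟨0, hk⟩) = n - k by omega)]
      funext i
      have hik := i.isLt
      simp only [cfg]
      by_cases h2 : (i : ℕ) + 1 < k
      · rw [dif_pos h2, dif_pos h2]
      · rw [dif_neg h2, dif_neg h2]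
        have e0 : (i : ℕ) + 1 - k = 0 := by omega
        rw [dif_pos (show (i : ℕ) + 1 - k < k by omega)]
        have e := lam_congr lam (show (i : ℕ) + 1 - k < k by omega) hk e0
        omega
    · -- inductive step
      have IH := ih hr0 (by omega)
      have hr1k : r - 1 < k := by omega
      have hab : lam ⟨r, hrk'⟩ ≤ lam ⟨r - 1, hr1k⟩ :=
        hanti (Fin.mk_le_mk.mpr (by omega))
      have hlea := hle ⟨r - 1, hr1k⟩
      have hstep : n - k - lam ⟨r, hrk'⟩ + (r + 1)
          = (lam ⟨r - 1, hr1k⟩ - lam ⟨r, hrk'⟩ + 1) + (n - k - lam ⟨r - 1, hr1k⟩ + r) := by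
        omega
      rw [hstep, shift_add, IH, shift_succ',
        shift_inc n k hk _ _ (by rw [cfg_at0 n k r _ lam hk hrk']; omega),
        shift1_rot n k hk _ (show cfg n k r (lam ⟨r - 1, hr1k⟩) lam ⟨0, hk⟩
            + (lam ⟨r - 1, hr1k⟩ - lam ⟨r, hrk'⟩) = n - k by
          rw [cfg_at0 n k r _ lam hk hrk']; omega)]
      funext i
      have hik := i.isLt
      by_cases h2 : (i : ℕ) + 1 < k
      · rw [dif_pos h2]
        show cfg n k r (lam ⟨r - 1, hr1k⟩) lam ⟨(i : ℕ) + 1, h2⟩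
            + (lam ⟨r - 1, hr1k⟩ - lam ⟨r, hrk'⟩) = cfg n k (r + 1) (lam ⟨r, hrk'⟩) lam i
        simp only [cfg]
        by_cases hA : (i : ℕ) + 1 + r < k
        · rw [dif_pos hA, dif_pos (show (i : ℕ) + (r + 1) < k by omega)]
          have e := lam_congr lam hA (show (i : ℕ) + (r + 1) < k by omega) (by omega)
          omega
        · rw [dif_neg hA, dif_neg (show ¬ ((i : ℕ) + (r + 1) < k) by omega)]
          rw [dif_pos (show (i : ℕ) + 1 + r - k < k by omega),
            dif_pos (show (i : ℕ) + (r + 1) - k < k by omega)]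
          have e := lam_congr lam (show (i : ℕ) + 1 + r - k < k by omega)
            (show (i : ℕ) + (r + 1) - k < k by omega) (by omega)
          have hmono : lam ⟨r - 1, hr1k⟩ ≤ lam ⟨(i : ℕ) + 1 + r - k, by omega⟩ :=
            hanti (Fin.mk_le_mk.mpr (by omega))
          omega
      · rw [dif_neg h2]
        show 0 = cfg n k (r + 1) (lam ⟨r, hrk'⟩) lam i
        simp only [cfg]
        rw [dif_neg (show ¬ ((i : ℕ) + (r + 1) < k) by omega),
          dif_pos (show (i : ℕ) + (r + 1) - k < k by omega)]
        have e := lam_congr lam (show (i : ℕ) + (r + 1) - k < k by omega) hrk' (by omega)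
        omega

lemma shift_tlam (n k : ℕ) (hk : 0 < k) (hkn : k ≤ n) (lam : Fin k → ℕ)
    (hanti : Antitone lam) (hle : ∀ j, lam j ≤ n - k) (hk1 : k - 1 < k) :
    seidelShift n k (n - lam ⟨k - 1, hk1⟩) lam
      = fun i => lam i - lam ⟨k - 1, hk1⟩ := by
  have hlek := hle ⟨k - 1, hk1⟩
  have e : n - lam ⟨k - 1, hk1⟩ = n - k - lam ⟨k - 1, hk1⟩ + k := by omega
  rw [e, shift_main n k hk hkn lam hanti hle k (by omega) (le_refl k)]
  funext i
  have hik := i.isLt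
  simp only [cfg]
  rw [dif_neg (show ¬ ((i : ℕ) + k < k) by omega),
    dif_pos (show (i : ℕ) + k - k < k by omega)]
  have e2 := lam_congr lam (show (i : ℕ) + k - k < k by omega) hik (by omega)
  have : (⟨(i : ℕ), hik⟩ : Fin k) = i := rfl
  rw [this] at e2
  omega

set_option maxHeartbeats 1000000 in
/-- Let `λ ∈ P_{k,n}` with `λ_k > 0` and `1 ≤ i ≤ n-k`, and
set `λ̃ = λ↑(n-λ_k)` (i.e. `λ↓λ_k`). If `ν̃ ∈ P_{k,n}` contains `λ̃` with
`ν̃/λ̃` a horizontal strip of size `≥ i`, then `ν̃₂ ≤ λ₁ - λ_k`, and the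
integer `d` with `d·n = |ν̃| - |ν̃↑λ_k| + λ_k·k` satisfies `d ≤ 1`, with
`d = 1` iff `ν̃₁ > n - k - λ_k`. -/
theorem seidel_shift_at_most_one_power (n k : ℕ) (hk : 1 ≤ k) (hkn : k < n)
    (i : ℕ) (hi1 : 1 ≤ i) (hi2 : i ≤ n - k)
    (lam : Fin k → ℕ) (hanti : Antitone lam) (hle : ∀ j, lam j ≤ n - k)
    (hlk : 0 < lam ⟨k - 1, by omega⟩)
    (tnu : Fin k → ℕ) (hanti' : Antitone tnu) (hle' : ∀ j, tnu j ≤ n - k)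
    (hsub : ∀ j, seidelShift n k (n - lam ⟨k - 1, by omega⟩) lam j ≤ tnu j)
    (hstrip : ∀ j : Fin k, ∀ h : (j : ℕ) + 1 < k,
      tnu ⟨(j : ℕ) + 1, h⟩ ≤ seidelShift n k (n - lam ⟨k - 1, by omega⟩) lam j)
    (hwt : i + ∑ j, seidelShift n k (n - lam ⟨k - 1, by omega⟩) lam j ≤ ∑ j, tnu j) :
    (∀ h : 1 < k, tnu ⟨1, h⟩ ≤ lam ⟨0, by omega⟩ - lam ⟨k - 1, by omega⟩) ∧
    ∃ d : ℕ,
      (d : ℤ) * n = (∑ j, (tnu j : ℤ)) -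
          (∑ j, (seidelShift n k (lam ⟨k - 1, by omega⟩) tnu j : ℤ)) +
          (lam ⟨k - 1, by omega⟩ : ℤ) * k ∧
      d ≤ 1 ∧
      (d = 1 ↔ n - k - lam ⟨k - 1, by omega⟩ < tnu ⟨0, by omega⟩) := by
  have hex : ∃ k', k = k' + 1 := ⟨k - 1, by omega⟩
  obtain ⟨k', hk'⟩ := hex
  subst hk'
  simp only [Nat.add_sub_cancel] at hlk hsub hstrip hwt ⊢
  have hk0 : 0 < k' + 1 := by omega
  have hkk : k' < k' + 1 := by omega
  have hmle : lam ⟨k', hkk⟩ ≤ n - (k' + 1) := hle _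
  have hm1 : 1 ≤ lam ⟨k', hkk⟩ := hlk
  have htl := shift_tlam n (k' + 1) hk0 (by omega) lam hanti hle hkk
  simp only [Nat.add_sub_cancel] at htl
  have part1 : ∀ h : 1 < k' + 1, tnu ⟨1, h⟩ ≤ lam ⟨0, hk0⟩ - lam ⟨k', hkk⟩ := by
    intro h1k
    have hs := hstrip ⟨0, hk0⟩ h1k
    rw [htl] at hs
    exact hs
  refine ⟨part1, ?_⟩
  by_cases hcase : tnu ⟨0, hk0⟩ + lam ⟨k', hkk⟩ ≤ n - (k' + 1)
  · refine ⟨0, ?_, by omega, iff_of_false (by norm_num) (by omega)⟩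
    have eA : seidelShift n (k' + 1) (lam ⟨k', hkk⟩) tnu
        = fun j => tnu j + lam ⟨k', hkk⟩ := shift_inc n (k' + 1) hk0 _ tnu hcase
    rw [eA]
    push_cast
    rw [Finset.sum_add_distrib]
    simp only [Finset.sum_const, Finset.card_univ, Fintype.card_fin, nsmul_eq_mul]
    push_cast
    ring
  · -- exactly one rotation
    have htnu0 : tnu ⟨0, hk0⟩ ≤ n - (k' + 1) := hle' _
    have hex2 : ∃ t0, t0 = n - (k' + 1) - tnu ⟨0, hk0⟩ := ⟨_, rfl⟩
    obtain ⟨t0, ht0⟩ := hex2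
    have hex3 : ∃ p, p = lam ⟨k', hkk⟩ - t0 - 1 := ⟨_, rfl⟩
    obtain ⟨p, hp⟩ := hex3
    have e0 : seidelShift n (k' + 1) t0 tnu = fun j => tnu j + t0 :=
      shift_inc n (k' + 1) hk0 _ tnu (by omega)
    have e1 : seidelShift1 n (k' + 1) (fun j => tnu j + t0)
        = fun j : Fin (k' + 1) =>
            if h2 : (j : ℕ) + 1 < k' + 1 then tnu ⟨(j : ℕ) + 1, h2⟩ + t0 else 0 := by
      rw [shift1_rot n (k' + 1) hk0 _
        (show tnu ⟨0, hk0⟩ + t0 = n - (k' + 1) by omega)]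
    have hψtop : (if h2 : (0 : ℕ) + 1 < k' + 1 then tnu ⟨0 + 1, h2⟩ + t0 else 0) + p
        ≤ n - (k' + 1) := by
      rcases Nat.eq_zero_or_pos k' with h | h
      · subst h; rw [dif_neg (by norm_num)]; omega
      · have h1k : (0 : ℕ) + 1 < k' + 1 := by omega
        rw [dif_pos h1k]
        have h2 := part1 (by omega)
        have e : tnu ⟨0 + 1, h1k⟩ = tnu ⟨1, by omega⟩ := rfl
        rw [e]
        have hla := hle ⟨0, hk0⟩
        omega
    have e2 : seidelShift n (k' + 1) p
          (fun j : Fin (k' + 1) =>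
            if h2 : (j : ℕ) + 1 < k' + 1 then tnu ⟨(j : ℕ) + 1, h2⟩ + t0 else 0)
        = fun j : Fin (k' + 1) =>
            (if h2 : (j : ℕ) + 1 < k' + 1 then tnu ⟨(j : ℕ) + 1, h2⟩ + t0 else 0) + p :=
      shift_inc n (k' + 1) hk0 p _ hψtop
    have hmeq : lam ⟨k', hkk⟩ = p + 1 + t0 := by omega
    have etot : seidelShift n (k' + 1) (lam ⟨k', hkk⟩) tnu
        = fun j : Fin (k' + 1) =>
            (if h2 : (j : ℕ) + 1 < k' + 1 then tnu ⟨(j : ℕ) + 1, h2⟩ + t0 else 0) + p := by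
      rw [hmeq, shift_add, e0, shift_succ, e1, e2]
    refine ⟨1, ?_, le_refl 1, iff_of_true rfl (by omega)⟩
    simp only [etot]
    have hsum : ∑ j : Fin (k' + 1),
          (((if h2 : (j : ℕ) + 1 < k' + 1 then tnu ⟨(j : ℕ) + 1, h2⟩ + t0 else 0) + p : ℕ) : ℤ)
        = (∑ j : Fin k', (tnu j.succ : ℤ)) + k' * ((t0 : ℤ) + p) + p := by
      rw [Fin.sum_univ_castSucc]
      have hlast : (((if h2 : ((Fin.last k' : Fin (k' + 1)) : ℕ) + 1 < k' + 1 then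
            tnu ⟨((Fin.last k' : Fin (k' + 1)) : ℕ) + 1, h2⟩ + t0 else 0) + p : ℕ) : ℤ)
          = (p : ℤ) := by
        rw [dif_neg (by simp)]
        push_cast; ring
      have hcs : ∀ j : Fin k',
          (((if h2 : ((j.castSucc : Fin (k' + 1)) : ℕ) + 1 < k' + 1 then
            tnu ⟨((j.castSucc : Fin (k' + 1)) : ℕ) + 1, h2⟩ + t0 else 0) + p : ℕ) : ℤ)
          = (tnu j.succ : ℤ) + t0 + p := by
        intro j
        rw [dif_pos (by simp [Fin.coe_castSucc])]
        push_cast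
        have : tnu ⟨((j.castSucc : Fin (k' + 1)) : ℕ) + 1, by simp⟩ = tnu j.succ := rfl
        rw [this]
      rw [Finset.sum_congr rfl (fun j _ => hcs j), hlast]
      rw [Finset.sum_add_distrib, Finset.sum_add_distrib]
      simp only [Finset.sum_const, Finset.card_univ, Fintype.card_fin, nsmul_eq_mul]
      ring
    simp only [hsum]
    have hSnu : ∑ j : Fin (k' + 1), (tnu j : ℤ)
        = (tnu ⟨0, hk0⟩ : ℤ) + ∑ j : Fin k', (tnu j.succ : ℤ) := Fin.sum_univ_succ _
    simp only [hSnu]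
    have h1 : (t0 : ℤ) + p + 1 = (lam ⟨k', hkk⟩ : ℤ) := by omega
    have h2 : (tnu ⟨0, hk0⟩ : ℤ) + t0 + ((k' : ℤ) + 1) = (n : ℤ) := by omega
    push_cast
    linear_combination ((k' : ℤ) + 1) * h1 - h2
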